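/- Assume 𝔭 = 𝔠. Suppose 𝔅 ⊆ P(ω) is a Boolean algebra of cardinality < 𝔠 containing all finite sets, S ⊆ ω is infinite, 𝔅 is trivial on S (for every B ∈ 𝔅, either B ∩ S or S \ B is finite), and (μ_k)_{k∈S} is a sequence in the unit ball of ℓ¹ with |μ_k({k})| ≥ c for a fixed c > 0. Then for every ε > 0 there exist infinite disjoint sets N, T ⊆ S and pairwise disjoint infinite sets A₀, A₁, A₂ ⊆ N such that: (i) (μ_k)_{k∈N} converges in variation norm on subsets of T; and (ii) the closure of {μ_k : k ∈ N} in the pointwise topology on the algebra 𝔅′ generated by 𝔅 ∪ {A₀, A₁, A₂} contains three measures of the form b·δ_{x_i} + ν_i (i = 0, 1, 2) with |b| ≥ c, where x₀, x₁, x₂ are three distinct ultrafilters on 𝔅′ (x_i being the unique nonprincipal ultrafilter containing A_i), and ‖ν_i − ν_j‖_{𝔅′} ≤ ε for all i, j. -/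

import Mathlib

/-- A family of subsets of `ω` has the strong finite intersection property. -/
def HasSFIP (F : Set (Set ℕ)) : Prop :=
  ∀ G : Finset (Set ℕ), ↑G ⊆ F → (⋂₀ (↑G : Set (Set ℕ)) : Set ℕ).Infinite

/-- A family of subsets of `ω` has an infinite pseudo-intersection. -/
def HasPseudoIntersection (F : Set (Set ℕ)) : Prop :=
  ∃ A : Set ℕ, A.Infinite ∧ ∀ B ∈ F, (A \ B).Finite

/-- The pseudo-intersection number `𝔭`. -/
noncomputable def pseudoIntersectionNumber : Cardinal :=
  sInf {c : Cardinal | ∃ F : Set (Set ℕ),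
    HasSFIP F ∧ ¬ HasPseudoIntersection F ∧ Cardinal.mk F = c}

/-- The finitely additive measure on `𝒫(ω)` associated to an `ℓ¹` element. -/
noncomputable def l1Meas (x : ℕ → ℝ) (B : Set ℕ) : ℝ := ∑' j : B, x j

/-- `ν` is a cluster point of the subsequence `(l1Meas (μ k))_{k ∈ N}` in the topology of
pointwise convergence on members of the family `𝔄`. -/
def IsClusterPtOnIn (μ : ℕ → ℕ → ℝ) (N : Set ℕ) (𝔄 : Set (Set ℕ)) (ν : Set ℕ → ℝ) : Prop :=
  ∀ ε > (0 : ℝ), ∀ F : Finset (Set ℕ), ↑F ⊆ 𝔄 →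
    {k ∈ N | ∀ B ∈ F, |l1Meas (μ k) B - ν B| < ε}.Infinite

open scoped Classical

/-!
Under `𝔭 = 𝔠` one can diagonalize against fewer than `𝔠` bounded sequences, so there is an
infinite `N₀ ⊆ S` along which `μ_k(B)` (`B ∈ 𝔅`), every coordinate `μ_k(j)` and the diagonal
`μ_k(k)` converge, to `w(j)` and `b` say; then `|b| ≥ c` and `w ∈ ℓ¹`. A sparse sequence `m` in
`N₀` makes `μ_{m_p}` close to `w` in variation on `range m \ {m_p}`. This gives (i) on `T`, and
shows that `ρ_k(B) := μ_k(B \ {k})` converges along `N` for every `B ⊆ N`. As `𝔅` is trivial on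
`S`, `ρ_k(B)` also converges for `B ∈ 𝔅`, hence for every `B ∈ 𝔅'`, which differs from a member
of `𝔅` only inside `N`. Along `A_i` the atom `μ_k(k) δ_k` tends to `b δ_{x_i}` on `𝔅'`, so
`b δ_{x_i} + lim ρ_k` is a cluster point for each `i`, with one and the same `ν = lim ρ_k`.
-/

open Filter Set Topology MeasureTheory
open scoped Cardinal

local notation:50 X " ⊆* " Y => Set.Finite (X \ Y)

theorem mem_cofinite_inf_principal {α : Type*} {s N : Set α} :
    s ∈ cofinite ⊓ 𝓟 N ↔ (N \ s).Finite := by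
  rw [mem_inf_principal, mem_cofinite]
  exact Iff.of_eq (congrArg Set.Finite (by ext; simp))

theorem Set.Infinite.infinite_of_mem_cofinite_inf_principal {α : Type*} {s N : Set α}
    (hN : N.Infinite) (hs : s ∈ cofinite ⊓ 𝓟 N) : s.Infinite :=
  (hN.sdiff (mem_cofinite_inf_principal.1 hs)).mono fun _ hx => by_contra fun h => hx.2 ⟨hx.1, h⟩

theorem tendsto_cofinite_inf_principal_range_iff {α β γ : Type*} {m : α → β}
    (hm : Function.Injective m) {g : β → γ} {l : Filter γ} :
    Tendsto g (cofinite ⊓ 𝓟 (range m)) l ↔ Tendsto (g ∘ m) cofinite l := by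
  rw [← map_comap, ← hm.comap_cofinite_eq, tendsto_map'_iff]

theorem Set.Finite.diff_trans {α : Type*} {X Y Z : Set α} (hXY : X ⊆* Y) (hYZ : Y ⊆* Z) :
    X ⊆* Z :=
  (hXY.union hYZ).subset fun x hx => by
    by_cases hy : x ∈ Y
    · exact Or.inr ⟨hy, hx.2⟩
    · exact Or.inl ⟨hx.1, hy⟩

theorem cofinite_inf_principal_le_of_almostSubset {α : Type*} {Q Q' : Set α} (h : Q ⊆* Q') :
    cofinite ⊓ 𝓟 Q ≤ cofinite ⊓ 𝓟 Q' := fun _ hs =>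
  mem_cofinite_inf_principal.2 (h.diff_trans (mem_cofinite_inf_principal.1 hs))

theorem tsum_subtype_mono_of_nonneg {α : Type*} {f : α → ℝ} (hf : Summable f) (h0 : 0 ≤ f)
    {J K : Set α} (h : J ⊆ K) : ∑' j : J, f j ≤ ∑' j : K, f j := by
  rw [tsum_subtype, tsum_subtype]
  exact (hf.indicator J).tsum_mono (hf.indicator K) (indicator_le_indicator_of_subset h h0)

theorem tsum_subtype_union_le {α : Type*} {f : α → ℝ} (hf : Summable f) (h0 : 0 ≤ f)
    (J K : Set α) : ∑' j : ↥(J ∪ K), f j ≤ ∑' j : J, f j + ∑' j : K, f j := by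
  rw [← union_sdiff_self, (hf.subtype _).tsum_union_disjoint disjoint_sdiff_right (hf.subtype _)]
  exact add_le_add_right (tsum_subtype_mono_of_nonneg hf h0 sdiff_subset) _

theorem tendsto_tsum_Ici_atTop_zero {f : ℕ → ℝ} (hf : Summable f) :
    Tendsto (fun y : ℕ => ∑' j : ↥(Ici y), f j) atTop (𝓝 0) := by
  have h (y : ℕ) : ∑' j : ↥(Ici y), f j = ∑' j, f j - ∑ j ∈ Finset.range y, f j := by
    rw [← hf.tsum_subtype_add_tsum_subtype_compl (Iio y), compl_Iio, ← Finset.coe_range,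
      Finset.tsum_subtype']
    ring
  simpa [h] using (tendsto_const_nhds (x := ∑' j, f j)).sub hf.hasSum.tendsto_sum_nat

theorem abs_l1Meas_le {x : ℕ → ℝ} (hx : Summable fun j => |x j|) (B : Set ℕ) :
    |l1Meas x B| ≤ ∑' j : B, |x j| := by
  simpa only [Real.norm_eq_abs, l1Meas] using
    norm_tsum_le_tsum_norm (f := fun j : B => x j) (hx.subtype B)

theorem l1Meas_union {x : ℕ → ℝ} (hx : Summable x) {B C : Set ℕ} (h : Disjoint B C) :
    l1Meas x (B ∪ C) = l1Meas x B + l1Meas x C :=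
  (hx.subtype B).tsum_union_disjoint h (hx.subtype C)

theorem l1Meas_sub {x y : ℕ → ℝ} (hx : Summable x) (hy : Summable y) (B : Set ℕ) :
    l1Meas (x - y) B = l1Meas x B - l1Meas y B :=
  (hx.subtype B).tsum_sub (hy.subtype B)

theorem l1Meas_eq_diff_singleton_add {x : ℕ → ℝ} (hx : Summable x) (B : Set ℕ) (k : ℕ) :
    l1Meas x B = l1Meas x (B \ {k}) + B.indicator x k := by
  by_cases hk : k ∈ B
  · conv_lhs => rw [← sdiff_union_of_subset (singleton_subset_iff.2 hk)]
    rw [l1Meas_union hx disjoint_sdiff_left, indicator_of_mem hk]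
    exact congrArg _ (tsum_singleton k x)
  · rw [sdiff_singleton_eq_self hk, indicator_of_notMem hk, add_zero]

theorem l1Meas_diff_singleton_union {x : ℕ → ℝ} (hx : Summable x) {B C : Set ℕ}
    (h : Disjoint B C) (k : ℕ) :
    l1Meas x ((B ∪ C) \ {k}) = l1Meas x (B \ {k}) + l1Meas x (C \ {k}) := by
  rw [union_sdiff_distrib, l1Meas_union hx (h.mono sdiff_subset sdiff_subset)]

theorem summable_abs_of_tendsto {κ : Type*} {l : Filter κ} [l.NeBot] {μ : κ → ℕ → ℝ}
    {w : ℕ → ℝ} (hlim : ∀ j, Tendsto (fun k => μ k j) l (𝓝 (w j)))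
    (hμ : ∀ k, Summable fun j => |μ k j|) {C : ℝ} (hC : ∀ k, ∑' j, |μ k j| ≤ C) :
    Summable fun j => |w j| := by
  refine summable_of_sum_range_le (c := C) (fun _ => abs_nonneg _) fun n => ?_
  refine le_of_tendsto (tendsto_finsetSum _ fun j _ => (hlim j).abs) (.of_forall fun k => ?_)
  exact ((hμ k).sum_le_tsum _ fun j _ => abs_nonneg _).trans (hC k)

/-! ### Pseudo-intersections and diagonalization -/

theorem hasPseudoIntersection_of_mk_lt {F : Set (Set ℕ)} (hF : HasSFIP F)
    (hlt : #F < pseudoIntersectionNumber) : HasPseudoIntersection F := by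
  by_contra h
  exact hlt.not_ge (csInf_le' ⟨F, hF, h, rfl⟩)

theorem IsChain.exists_almostSubset_of_finset {F : Set (Set ℕ)}
    (hchain : IsChain (fun X Y => X ⊆* Y) F) (hne : F.Nonempty) (G : Finset (Set ℕ))
    (hG : ↑G ⊆ F) : ∃ W ∈ F, ∀ B ∈ G, W ⊆* B := by
  induction G using Finset.induction_on with
  | empty => exact hne.imp fun W hW => ⟨hW, by simp⟩
  | insert B G _ ih =>
    obtain ⟨W, hWF, hW⟩ := ih ((Finset.coe_subset.2 (Finset.subset_insert B G)).trans hG)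
    have hBF : B ∈ F := hG (Finset.mem_insert_self B G)
    by_cases hWB : W ⊆* B
    · exact ⟨W, hWF, by simpa [hWB] using hW⟩
    · have hBW : B ⊆* W := by
        obtain rfl | hne := eq_or_ne W B
        · simp at hWB
        · exact (hchain hWF hBF hne).resolve_left hWB
      exact ⟨B, hBF, by simpa using fun C hC => hBW.diff_trans (hW C hC)⟩

theorem IsChain.hasSFIP {F : Set (Set ℕ)} (hchain : IsChain (fun X Y => X ⊆* Y) F)
    (hne : F.Nonempty) (hinf : ∀ X ∈ F, X.Infinite) : HasSFIP F := by
  intro G hG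
  obtain ⟨W, hWF, hW⟩ := hchain.exists_almostSubset_of_finset hne G hG
  refine ((hinf W hWF).sdiff (G.finite_toSet.biUnion fun B hB => hW B hB)).mono ?_
  intro x hx
  simp only [mem_sInter, Finset.mem_coe]
  exact fun B hB => by_contra fun hxB => hx.2 (mem_biUnion hB ⟨hx.1, hxB⟩)

theorem Set.Infinite.exists_subset_tendsto {X : Type*} [PseudoMetricSpace X] [ProperSpace X]
    {P : Set ℕ} (hP : P.Infinite) {g : ℕ → X} (hg : Bornology.IsBounded (range g)) :
    ∃ Q ⊆ P, Q.Infinite ∧ ∃ L, Tendsto g (cofinite ⊓ 𝓟 Q) (𝓝 L) := by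
  obtain ⟨L, -, φ, hφ, hL⟩ :=
    tendsto_subseq_of_bounded hg (x := g ∘ Nat.nth (· ∈ P)) fun n => mem_range_self _
  have hψ : StrictMono (Nat.nth (· ∈ P) ∘ φ) := (Nat.nth_strictMono hP).comp hφ
  refine ⟨range (Nat.nth (· ∈ P) ∘ φ), range_subset_iff.2 fun n => Nat.nth_mem_of_infinite hP _,
    infinite_range_of_injective hψ.injective, L, ?_⟩
  rwa [tendsto_cofinite_inf_principal_range_iff hψ.injective, Nat.cofinite_eq_atTop]

theorem exists_almostSubset_tendsto_of_isChain (hp : pseudoIntersectionNumber = 𝔠)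
    {F : Set (Set ℕ)} (hF : #F < 𝔠) (hchain : IsChain (fun X Y => X ⊆* Y) F)
    (hne : F.Nonempty) (hinf : ∀ Y ∈ F, Y.Infinite) {X : Type*} [PseudoMetricSpace X]
    [ProperSpace X] {g : ℕ → X} (hg : Bornology.IsBounded (range g)) :
    ∃ Q, Q.Infinite ∧ (∀ Y ∈ F, Q ⊆* Y) ∧ ∃ L, Tendsto g (cofinite ⊓ 𝓟 Q) (𝓝 L) := by
  obtain ⟨P, hP, hPF⟩ := hasPseudoIntersection_of_mk_lt (hchain.hasSFIP hne hinf) (hp ▸ hF)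
  obtain ⟨Q, hQP, hQ, hL⟩ := hP.exists_subset_tendsto hg
  exact ⟨Q, hQ, fun Y hY => (hPF Y hY).subset (sdiff_subset_sdiff_left hQP), hL⟩

theorem isChain_almostSubset_insert_image {ι : Type*} [LinearOrder ι] {g : ι → Set ℕ}
    {S : Set ℕ} {J : Set ι} (hS : ∀ j ∈ J, g j ⊆* S) (hg : ∀ j ∈ J, ∀ j' < j, g j ⊆* g j') :
    IsChain (fun X Y => X ⊆* Y) (insert S (g '' J)) := by
  refine IsChain.insert ?_ fun _ ⟨j, hj, h⟩ _ => Or.inr (h ▸ hS j hj)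
  rintro _ ⟨j, hj, rfl⟩ _ ⟨j', hj', rfl⟩ hne
  rcases lt_or_gt_of_ne (ne_of_apply_ne g hne) with h | h
  exacts [Or.inr (hg j' hj' j h), Or.inl (hg j hj j' h)]

/-- Along a well-order of `I`, `g i` is chosen `⊆*` below all earlier `g j` with `f i` convergent
along it: every initial segment has fewer than `𝔠 = 𝔭` members, so the chain can always be
continued, and a pseudo-intersection of the whole chain serves all `i` at once. -/
theorem exists_infinite_subset_forall_tendsto (hp : pseudoIntersectionNumber = 𝔠)
    {I : Type} (hI : #I < 𝔠) {X : Type*} [PseudoMetricSpace X] [ProperSpace X]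
    (f : I → ℕ → X) (hf : ∀ i, Bornology.IsBounded (range (f i))) {S : Set ℕ}
    (hS : S.Infinite) : ∃ N ⊆ S, N.Infinite ∧ ∀ i, ∃ L, Tendsto (f i) (cofinite ⊓ 𝓟 N) (𝓝 L) := by
  obtain ⟨_, _⟩ := exists_wellFoundedLT I
  let Good (F : Set (Set ℕ)) (i : I) (Q : Set ℕ) : Prop :=
    Q.Infinite ∧ (∀ Y ∈ F, Q ⊆* Y) ∧ ∃ L, Tendsto (f i) (cofinite ⊓ 𝓟 Q) (𝓝 L)
  let g : I → Set ℕ := WellFoundedLT.fix (motive := fun _ => Set ℕ) fun i prev =>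
    Classical.epsilon (Good (insert S (range fun j : Iio i => prev j j.2)) i)
  have hg_eq (i : I) : g i = Classical.epsilon (Good (insert S (g '' Iio i)) i) := by
    rw [image_eq_range]
    exact WellFoundedLT.fix_eq _ i
  have hcard (J : Set I) : #(insert S (g '' J) : Set (Set ℕ)) < 𝔠 :=
    Cardinal.mk_insert_le.trans_lt <| Cardinal.add_lt_of_lt Cardinal.aleph0_le_continuum
      (Cardinal.mk_image_le.trans_lt ((Cardinal.mk_set_le J).trans_lt hI))
      (Cardinal.one_lt_aleph0.trans Cardinal.aleph0_lt_continuum)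
  have hchain (J : Set I) (hJ : ∀ j ∈ J, Good (insert S (g '' Iio j)) j (g j)) :
      IsChain (fun X Y => X ⊆* Y) (insert S (g '' J)) ∧
        ∀ Y ∈ insert S (g '' J), Y.Infinite := by
    refine ⟨isChain_almostSubset_insert_image (fun j hj => (hJ j hj).2.1 S (mem_insert S _))
      fun j hj j' h => (hJ j hj).2.1 _ (mem_insert_of_mem _ (mem_image_of_mem g h)), ?_⟩
    rintro Y (rfl | ⟨j, hj, rfl⟩)
    exacts [hS, (hJ j hj).1]
  have hgood (i : I) : Good (insert S (g '' Iio i)) i (g i) := by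
    induction i using WellFoundedLT.induction with
    | _ i ih =>
      obtain ⟨hc, hinf⟩ := hchain (Iio i) ih
      rw [hg_eq]
      exact Classical.epsilon_spec <|
        exists_almostSubset_tendsto_of_isChain hp (hcard _) hc ⟨S, mem_insert _ _⟩ hinf (hf i)
  obtain ⟨hc, hinf⟩ := hchain univ fun i _ => hgood i
  obtain ⟨P, hP, hPF⟩ :=
    hasPseudoIntersection_of_mk_lt (hc.hasSFIP ⟨S, mem_insert _ _⟩ hinf) (hp ▸ hcard univ)
  refine ⟨P ∩ S, inter_subset_right, ?_, fun i => ?_⟩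
  · simpa [Set.sdiff_sdiff_right_self] using hP.sdiff (hPF S (mem_insert _ _))
  · obtain ⟨L, hL⟩ := (hgood i).2.2
    refine ⟨L, hL.mono_left (cofinite_inf_principal_le_of_almostSubset ?_)⟩
    exact (hPF _ (mem_insert_of_mem _ (mem_image_of_mem g (mem_univ i)))).subset
      (sdiff_subset_sdiff_left inter_subset_left)

theorem exists_infinite_subset_tendsto_l1Meas (hp : pseudoIntersectionNumber = 𝔠)
    {𝔅 : Set (Set ℕ)} (hcard : #𝔅 < 𝔠) {S : Set ℕ} (hS : S.Infinite) {μ : ℕ → ℕ → ℝ}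
    (hμ : ∀ k, Summable fun j => |μ k j|) {C : ℝ} (hC : ∀ k, ∑' j, |μ k j| ≤ C) :
    ∃ N ⊆ S, N.Infinite ∧
      (∀ B ∈ 𝔅, ∃ L, Tendsto (fun k => l1Meas (μ k) B) (cofinite ⊓ 𝓟 N) (𝓝 L)) ∧
      (∀ j, ∃ L, Tendsto (fun k => μ k j) (cofinite ⊓ 𝓟 N) (𝓝 L)) ∧
      ∃ b, Tendsto (fun k => μ k k) (cofinite ⊓ 𝓟 N) (𝓝 b) := by
  have hbdd (f : ℕ → ℝ) (hf : ∀ k, |f k| ≤ C) : Bornology.IsBounded (range f) :=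
    Metric.isBounded_closedBall.subset
      (range_subset_iff.2 fun k => mem_closedBall_zero_iff.2 (hf k))
  have hI : #(𝔅 ⊕ Option ℕ) < 𝔠 := by
    rw [Cardinal.mk_sum, Cardinal.lift_id, Cardinal.lift_id]
    exact Cardinal.add_lt_of_lt Cardinal.aleph0_le_continuum hcard
      (Cardinal.mk_le_aleph0.trans_lt Cardinal.aleph0_lt_continuum)
  let f : 𝔅 ⊕ Option ℕ → ℕ → ℝ := Sum.elim (fun B k => l1Meas (μ k) B) fun o k => μ k (o.getD k)
  have hf : ∀ i, Bornology.IsBounded (range (f i)) := by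
    rintro (B | o)
    · exact hbdd _ fun k => (abs_l1Meas_le (hμ k) B).trans
        (((hμ k).tsum_subtype_le _ B fun _ => abs_nonneg _).trans (hC k))
    · exact hbdd _ fun k => ((hμ k).le_tsum _ fun _ _ => abs_nonneg _).trans (hC k)
  obtain ⟨N, hNS, hN, hlim⟩ := exists_infinite_subset_forall_tendsto hp hI f hf hS
  exact ⟨N, hNS, hN, fun B hB => hlim (.inl ⟨B, hB⟩), fun j => hlim (.inr (some j)),
    hlim (.inr none)⟩

/-! ### A sparse subsequence -/

theorem exists_seq_of_forall_finset {α : Type*} [DecidableEq α] (Q : Finset α → α → Prop)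
    (h : ∀ s, ∃ y, Q s y) : ∃ f : ℕ → α, ∀ n, Q ((Finset.range n).image f) (f n) := by
  choose next hnext using h
  let s : ℕ → Finset α := fun n => Nat.rec ∅ (fun _ t => insert (next t) t) n
  have hs (n : ℕ) : s n = (Finset.range n).image fun i => next (s i) := by
    induction n with
    | zero => rfl
    | succ n ih => rw [Finset.range_add_one, Finset.image_insert, ← ih]
  exact ⟨fun n => next (s n), fun n => hs n ▸ hnext (s n)⟩

theorem tsum_abs_sub_le_of_subset_union {x w : ℕ → ℝ} (hx : Summable fun j => |x j|)
    (hw : Summable fun j => |w j|) {J : Set ℕ} {s : Finset ℕ} {y : ℕ} (hJ : J ⊆ ↑s ∪ Ici y) :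
    ∑' j : J, |x j - w j| ≤
      ∑ j ∈ s, |x j - w j| + (∑' j : ↥(Ici y), |x j| + ∑' j : ↥(Ici y), |w j|) := by
  have hxw : Summable fun j => |x j - w j| := (hx.of_abs.sub hw.of_abs).abs
  calc ∑' j : J, |x j - w j|
      ≤ ∑' j : ↥(↑s ∪ Ici y), |x j - w j| :=
        tsum_subtype_mono_of_nonneg hxw (fun _ => abs_nonneg _) hJ
    _ ≤ ∑' j : ↥(s : Set ℕ), |x j - w j| + ∑' j : ↥(Ici y), |x j - w j| :=
        tsum_subtype_union_le hxw (fun _ => abs_nonneg _) _ _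
    _ ≤ _ := by
      rw [Finset.tsum_subtype' s fun j => |x j - w j|]
      gcongr
      refine ((hxw.subtype _).tsum_mono ((hx.subtype _).add (hw.subtype _))
        fun j => abs_sub _ _).trans_eq ?_
      exact (hx.subtype _).tsum_add (hw.subtype _)

theorem eventually_forall_tsum_Ici_le {μ : ℕ → ℕ → ℝ} {w : ℕ → ℝ}
    (hμ : ∀ k, Summable fun j => |μ k j|) (hw : Summable fun j => |w j|) {N : Set ℕ}
    (hlim : ∀ j, Tendsto (fun k => μ k j) (cofinite ⊓ 𝓟 N) (𝓝 (w j))) (s : Finset ℕ) {ε : ℝ}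
    (hε : 0 < ε) :
    ∀ᶠ y in cofinite ⊓ 𝓟 N, (∀ x ∈ s, x < y ∧ ∑' j : ↥(Ici y), |μ x j| ≤ ε) ∧
      ∑ x ∈ s, |μ y x - w x| ≤ ε ∧ ∑' j : ↥(Ici y), |w j| ≤ ε := by
  have hat : cofinite ⊓ 𝓟 N ≤ atTop := Nat.cofinite_eq_atTop ▸ inf_le_left
  have hhead : Tendsto (fun y => ∑ x ∈ s, |μ y x - w x|) (cofinite ⊓ 𝓟 N) (𝓝 0) := by
    simpa using tendsto_finsetSum s fun x _ => ((hlim x).sub_const (w x)).abs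
  refine .and ?_ ((hhead.eventually (eventually_le_nhds hε)).and ?_)
  · refine (Finset.eventually_all s).2 fun x _ => Eventually.filter_mono hat ?_
    exact (eventually_gt_atTop x).and
      ((tendsto_tsum_Ici_atTop_zero (hμ x)).eventually (eventually_le_nhds hε))
  · exact ((tendsto_tsum_Ici_atTop_zero hw).eventually (eventually_le_nhds hε)).filter_mono hat

/-- Each new `m_p` is chosen so late that `μ_{m_p}` is already close to `w` at the earlier
points, and that all earlier `μ_{m_i}` and `w` have small tails beyond it. -/
theorem exists_strictMono_tendsto_tsum_abs_sub {μ : ℕ → ℕ → ℝ} {w : ℕ → ℝ}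
    (hμ : ∀ k, Summable fun j => |μ k j|) (hw : Summable fun j => |w j|) {N : Set ℕ}
    (hN : N.Infinite) (hlim : ∀ j, Tendsto (fun k => μ k j) (cofinite ⊓ 𝓟 N) (𝓝 (w j))) :
    ∃ m : ℕ → ℕ, StrictMono m ∧ range m ⊆ N ∧
      Tendsto (fun p => ∑' j : ↥(range m \ {m p}), |μ (m p) j - w j|) atTop (𝓝 0) := by
  let θ (n : ℕ) : ℝ := 1 / (n + 1)
  have hθ (n : ℕ) : 0 < θ n := Nat.one_div_pos_of_nat
  let Q (s : Finset ℕ) (y : ℕ) : Prop :=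
    y ∈ N ∧ (∀ x ∈ s, x < y ∧ ∑' j : ↥(Ici y), |μ x j| ≤ θ s.card) ∧
      ∑ x ∈ s, |μ y x - w x| ≤ θ s.card ∧ ∑' j : ↥(Ici y), |w j| ≤ θ s.card
  have hQ (s : Finset ℕ) : ∃ y, Q s y := by
    have := hN.cofinite_inf_principal_neBot
    have hmemN : ∀ᶠ y in cofinite ⊓ 𝓟 N, y ∈ N := mem_inf_of_right (mem_principal_self N)
    exact (hmemN.and (eventually_forall_tsum_Ici_le hμ hw hlim s (hθ _))).exists
  obtain ⟨m, hm⟩ := exists_seq_of_forall_finset Q hQ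
  have hmono : StrictMono m := fun a b hab =>
    ((hm b).2.1 (m a) (Finset.mem_image_of_mem m (Finset.mem_range.2 hab))).1
  have hcard (n : ℕ) : ((Finset.range n).image m).card = n := by
    rw [Finset.card_image_of_injective _ hmono.injective, Finset.card_range]
  have hcover (p : ℕ) : range m \ {m p} ⊆ ↑((Finset.range p).image m) ∪ Ici (m (p + 1)) := by
    rintro _ ⟨⟨i, rfl⟩, hi⟩
    rcases lt_or_gt_of_ne fun h : i = p => hi (h ▸ rfl) with h | h
    · exact Or.inl (Finset.mem_image_of_mem m (Finset.mem_range.2 h))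
    · exact Or.inr (hmono.monotone h)
  have hdev (p : ℕ) : ∑' j : ↥(range m \ {m p}), |μ (m p) j - w j| ≤ 3 * θ p := by
    have hhead := (hm p).2.2.1
    have htail := ((hm (p + 1)).2.1 (m p)
      (Finset.mem_image_of_mem m (Finset.mem_range.2 p.lt_add_one))).2
    have htail' := (hm (p + 1)).2.2.2
    have hθ_anti : θ (p + 1) ≤ θ p := Nat.one_div_le_one_div p.le_succ
    rw [hcard] at hhead htail htail'
    linarith [tsum_abs_sub_le_of_subset_union (hμ (m p)) hw (hcover p)]
  refine ⟨m, hmono, range_subset_iff.2 fun n => (hm n).1, ?_⟩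
  refine squeeze_zero (fun _ => tsum_nonneg fun _ => abs_nonneg _) hdev ?_
  simpa [θ] using (tendsto_one_div_add_atTop_nhds_zero_nat (𝕜 := ℝ)).const_mul 3

theorem exists_infinite_disjoint_subsets_range {m : ℕ → ℕ} (hm : Function.Injective m)
    (ι : Type*) [Countable ι] :
    ∃ (N T : Set ℕ) (A : ι → Set ℕ), N ⊆ range m ∧ T ⊆ range m ∧ N.Infinite ∧ T.Infinite ∧
      Disjoint N T ∧ (∀ i, A i ⊆ N) ∧ (∀ i, (A i).Infinite) ∧
      ∀ i j, i ≠ j → Disjoint (A i) (A j) := by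
  obtain ⟨e, he⟩ := Countable.exists_injective_nat ι
  refine ⟨range fun t => m (2 * t), range fun t => m (2 * t + 1),
    fun i => range fun t => m (2 * Nat.pair (e i) t), range_comp_subset_range _ m,
    range_comp_subset_range _ m, infinite_range_of_injective fun a b h => by
      have := hm h; omega, infinite_range_of_injective fun a b h => by have := hm h; omega, ?_,
    fun i => range_subset_iff.2 fun t => mem_range_self _,
    fun i => infinite_range_of_injective fun a b h => ?_, fun i j hij => ?_⟩
  · rw [disjoint_left]
    rintro _ ⟨t, rfl⟩ ⟨s, hs⟩
    have := hm hs
    omega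
  · exact (Nat.pair_eq_pair.1 (Nat.eq_of_mul_eq_mul_left two_pos (hm h))).2
  · rw [disjoint_left]
    rintro _ ⟨t, rfl⟩ ⟨s, hs⟩
    exact hij (he (Nat.pair_eq_pair.1 (Nat.eq_of_mul_eq_mul_left two_pos (hm hs))).1).symm

section SparseSequence

variable {μ : ℕ → ℕ → ℝ} {w : ℕ → ℝ} {m : ℕ → ℕ}

theorem exists_forall_tsum_abs_sub_lt (hμ : ∀ k, Summable fun j => |μ k j|)
    (hw : Summable fun j => |w j|) (hm : StrictMono m)
    (hdev : Tendsto (fun p => ∑' j : ↥(range m \ {m p}), |μ (m p) j - w j|) atTop (𝓝 0))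
    {N T : Set ℕ} (hN : N ⊆ range m) (hT : T ⊆ range m) (hNT : Disjoint N T) {δ : ℝ}
    (hδ : 0 < δ) :
    ∃ n₀ : ℕ, ∀ k ∈ N, ∀ k' ∈ N, n₀ ≤ k → n₀ ≤ k' → ∑' j : T, |μ k j - μ k' j| < δ := by
  have hsub (k : ℕ) : Summable fun j => |μ k j - w j| := ((hμ k).of_abs.sub hw.of_abs).abs
  have hT_le (p : ℕ) (hp : m p ∈ N) :
      ∑' j : T, |μ (m p) j - w j| ≤ ∑' j : ↥(range m \ {m p}), |μ (m p) j - w j| :=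
    tsum_subtype_mono_of_nonneg (hsub _) (fun _ => abs_nonneg _) fun j hj =>
      ⟨hT hj, fun h => disjoint_left.1 hNT (mem_singleton_iff.1 h ▸ hp) hj⟩
  obtain ⟨n, hn⟩ := eventually_atTop.1 (hdev.eventually (gt_mem_nhds (half_pos hδ)))
  refine ⟨m n, ?_⟩
  rintro _ hk _ hk' hkn hk'n
  obtain ⟨p, rfl⟩ := hN hk
  obtain ⟨q, rfl⟩ := hN hk'
  calc ∑' j : T, |μ (m p) j - μ (m q) j|
      ≤ ∑' j : T, (|μ (m p) j - w j| + |μ (m q) j - w j|) := by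
        refine ((((hμ _).of_abs.sub (hμ _).of_abs).abs.subtype T).tsum_mono
          (((hsub _).subtype T).add ((hsub _).subtype T)) fun j => ?_)
        exact (abs_sub_le _ (w j.1) _).trans_eq (by rw [abs_sub_comm (w j.1)])
    _ = ∑' j : T, |μ (m p) j - w j| + ∑' j : T, |μ (m q) j - w j| :=
        ((hsub _).subtype T).tsum_add ((hsub _).subtype T)
    _ < δ / 2 + δ / 2 := add_lt_add ((hT_le p hk).trans_lt (hn p (hm.le_iff_le.1 hkn)))
        ((hT_le q hk').trans_lt (hn q (hm.le_iff_le.1 hk'n)))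
    _ = δ := add_halves δ

theorem tendsto_l1Meas_diff_singleton (hμ : ∀ k, Summable fun j => |μ k j|)
    (hw : Summable fun j => |w j|) (hm : StrictMono m)
    (hdev : Tendsto (fun p => ∑' j : ↥(range m \ {m p}), |μ (m p) j - w j|) atTop (𝓝 0))
    {B : Set ℕ} (hB : B ⊆ range m) :
    Tendsto (fun k => l1Meas (μ k) (B \ {k})) (cofinite ⊓ 𝓟 (range m)) (𝓝 (l1Meas w B)) := by
  rw [tendsto_cofinite_inf_principal_range_iff hm.injective, Nat.cofinite_eq_atTop,
    tendsto_iff_norm_sub_tendsto_zero]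
  have hwm : Tendsto (fun p => |w (m p)|) atTop (𝓝 0) := by
    simpa [Nat.cofinite_eq_atTop] using
      (hw.of_abs.tendsto_cofinite_zero.comp hm.injective.tendsto_cofinite).abs
  refine squeeze_zero (fun _ => norm_nonneg _) (fun p => ?_) (by simpa using hdev.add hwm)
  have hsub : Summable fun j => |(μ (m p) - w) j| := ((hμ _).of_abs.sub hw.of_abs).abs
  calc ‖l1Meas (μ (m p)) (B \ {m p}) - l1Meas w B‖
      = |l1Meas (μ (m p) - w) (B \ {m p}) - B.indicator w (m p)| := by
        rw [l1Meas_eq_diff_singleton_add hw.of_abs B (m p), Real.norm_eq_abs,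
          l1Meas_sub (hμ _).of_abs hw.of_abs]
        ring_nf
    _ ≤ |l1Meas (μ (m p) - w) (B \ {m p})| + |B.indicator w (m p)| := abs_sub _ _
    _ ≤ ∑' j : ↥(range m \ {m p}), |μ (m p) j - w j| + |w (m p)| := by
        refine add_le_add ((abs_l1Meas_le hsub _).trans ?_) ?_
        · exact tsum_subtype_mono_of_nonneg hsub (fun _ => abs_nonneg _)
            (sdiff_subset_sdiff_left hB)
        · by_cases h : m p ∈ B <;> simp [h]

end SparseSequence

/-! ### Algebras trivial on a set -/

/-- `𝔅` is *trivial on `Y`* in the sense of the paper iff `𝔅 ⊆ trivialOn Y`. -/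
def trivialOn (Y : Set ℕ) : Set (Set ℕ) := {B | (B ∩ Y).Finite ∨ (Y \ B).Finite}

theorem isSetAlgebra_trivialOn (Y : Set ℕ) : IsSetAlgebra (trivialOn Y) where
  empty_mem := Or.inl (by simp)
  compl_mem := by
    rintro B (h | h)
    · exact Or.inr (by rwa [sdiff_compl, inter_comm])
    · exact Or.inl (by rwa [inter_comm, ← sdiff_eq])
  union_mem := by
    rintro B C (hB | hB) (hC | hC)
    · exact Or.inl (by rw [union_inter_distrib_right]; exact hB.union hC)
    · exact Or.inr (hC.subset (sdiff_subset_sdiff_right subset_union_right))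
    · exact Or.inr (hB.subset (sdiff_subset_sdiff_right subset_union_left))
    · exact Or.inr (hB.subset (sdiff_subset_sdiff_right subset_union_left))

theorem trivialOn_anti {Y Z : Set ℕ} (h : Y ⊆ Z) : trivialOn Z ⊆ trivialOn Y := by
  rintro B (hB | hB)
  exacts [Or.inl (hB.subset (inter_subset_inter_right B h)),
    Or.inr (hB.subset (sdiff_subset_sdiff_left h))]

theorem tendsto_indicator_of_mem_trivialOn {M : Type*} [TopologicalSpace M] [Zero M]
    {Y B : Set ℕ} (hB : B ∈ trivialOn Y) {d : ℕ → M} {b : M}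
    (hd : Tendsto d (cofinite ⊓ 𝓟 Y) (𝓝 b)) :
    Tendsto (B.indicator d) (cofinite ⊓ 𝓟 Y) (𝓝 (if (Y \ B).Finite then b else 0)) := by
  split_ifs with h
  · exact hd.congr' (eventually_of_mem (mem_cofinite_inf_principal.2 h) fun k hk =>
      (indicator_of_mem hk d).symm)
  · have hBc : Bᶜ ∈ cofinite ⊓ 𝓟 Y :=
      mem_cofinite_inf_principal.2 (by rw [sdiff_compl, inter_comm]; exact hB.resolve_right h)
    exact tendsto_const_nhds.congr' (eventually_of_mem hBc fun k hk =>
      (indicator_of_notMem hk d).symm)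

theorem generateSetAlgebra_subset_trivialOn {𝔅 : Set (Set ℕ)} {ι : Type*} {A : ι → Set ℕ}
    {N : Set ℕ} (htriv : 𝔅 ⊆ trivialOn N) (hAN : ∀ i, A i ⊆ N)
    (hA : ∀ i j, i ≠ j → Disjoint (A i) (A j)) (i : ι) :
    generateSetAlgebra (𝔅 ∪ range A) ⊆ trivialOn (A i) := by
  refine (isSetAlgebra_trivialOn _).generateSetAlgebra_subset (union_subset ?_ ?_)
  · exact htriv.trans (trivialOn_anti (hAN i))
  · rintro _ ⟨j, rfl⟩
    obtain rfl | hji := eq_or_ne j i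
    · exact Or.inr (by simp)
    · exact Or.inl (by simp [(hA j i hji).inter_eq])

theorem MeasureTheory.IsSetAlgebra.setOf_sdiff_eq {α : Type*} {𝔅 : Set (Set α)}
    (h𝔅 : IsSetAlgebra 𝔅) (N : Set α) : IsSetAlgebra {B | ∃ B₀ ∈ 𝔅, B \ N = B₀ \ N} where
  empty_mem := ⟨∅, h𝔅.empty_mem, rfl⟩
  compl_mem := by
    rintro B ⟨B₀, hB₀, h⟩
    refine ⟨B₀ᶜ, h𝔅.compl_mem hB₀, ?_⟩
    ext x
    have := congrArg (x ∈ ·) h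
    simp only [Set.mem_sdiff, mem_compl_iff, eq_iff_iff] at this ⊢
    tauto
  union_mem := by
    rintro B C ⟨B₀, hB₀, hB⟩ ⟨C₀, hC₀, hC⟩
    exact ⟨B₀ ∪ C₀, h𝔅.union_mem hB₀ hC₀, by rw [union_sdiff_distrib, union_sdiff_distrib, hB, hC]⟩

theorem exists_tendsto_of_mem_generateSetAlgebra {α ι : Type*} {l : Filter ι}
    {ρ : ι → Set α → ℝ} (hρ : ∀ k B C, Disjoint B C → ρ k (B ∪ C) = ρ k B + ρ k C)
    {𝔅 𝒜 : Set (Set α)} {N : Set α} (h𝔅 : IsSetAlgebra 𝔅) (h𝒜 : ∀ A ∈ 𝒜, A ⊆ N)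
    (h𝔅lim : ∀ B ∈ 𝔅, ∃ L, Tendsto (ρ · B) l (𝓝 L))
    (hNlim : ∀ C ⊆ N, ∃ L, Tendsto (ρ · C) l (𝓝 L)) {B : Set α}
    (hB : B ∈ generateSetAlgebra (𝔅 ∪ 𝒜)) : ∃ L, Tendsto (ρ · B) l (𝓝 L) := by
  have hgen : 𝔅 ∪ 𝒜 ⊆ {B | ∃ B₀ ∈ 𝔅, B \ N = B₀ \ N} := union_subset (fun B hB => ⟨B, hB, rfl⟩)
    fun A hA => ⟨∅, h𝔅.empty_mem, by rw [Set.sdiff_eq_empty.2 (h𝒜 A hA), Set.empty_sdiff]⟩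
  obtain ⟨B₀, hB₀, hdiff⟩ := (h𝔅.setOf_sdiff_eq N).generateSetAlgebra_subset hgen hB
  have hsplit (C : Set α) (k : ι) : ρ k C = ρ k (C ∩ N) + ρ k (C \ N) := by
    rw [← hρ k _ _ disjoint_sdiff_inter.symm, inter_union_sdiff]
  obtain ⟨L₀, hL₀⟩ := h𝔅lim B₀ hB₀
  obtain ⟨L₁, hL₁⟩ := hNlim (B₀ ∩ N) inter_subset_right
  obtain ⟨L₂, hL₂⟩ := hNlim (B ∩ N) inter_subset_right
  refine ⟨L₂ + (L₀ - L₁), (hL₂.add (hL₀.sub hL₁)).congr fun k => ?_⟩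
  rw [hsplit B k, hsplit B₀ k, hdiff]
  ring

theorem exists_tendsto_l1Meas_diff_singleton_of_mem_generateSetAlgebra {μ : ℕ → ℕ → ℝ}
    (hμ : ∀ k, Summable (μ k)) {𝔅 𝒜 : Set (Set ℕ)} (h𝔅 : IsSetAlgebra 𝔅) {N : Set ℕ}
    (htriv : 𝔅 ⊆ trivialOn N) (h𝒜 : ∀ A ∈ 𝒜, A ⊆ N)
    (h𝔅lim : ∀ B ∈ 𝔅, ∃ L, Tendsto (fun k => l1Meas (μ k) B) (cofinite ⊓ 𝓟 N) (𝓝 L))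
    {b : ℝ} (hb : Tendsto (fun k => μ k k) (cofinite ⊓ 𝓟 N) (𝓝 b))
    (hNlim : ∀ C ⊆ N, ∃ L, Tendsto (fun k => l1Meas (μ k) (C \ {k})) (cofinite ⊓ 𝓟 N) (𝓝 L))
    {B : Set ℕ} (hB : B ∈ generateSetAlgebra (𝔅 ∪ 𝒜)) :
    ∃ L, Tendsto (fun k => l1Meas (μ k) (B \ {k})) (cofinite ⊓ 𝓟 N) (𝓝 L) := by
  refine exists_tendsto_of_mem_generateSetAlgebra
    (fun k B C h => l1Meas_diff_singleton_union (hμ k) h k) h𝔅 h𝒜 (fun B hB => ?_) hNlim hB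
  obtain ⟨L, hL⟩ := h𝔅lim B hB
  refine ⟨_, (hL.sub (tendsto_indicator_of_mem_trivialOn (htriv hB) hb)).congr fun k => ?_⟩
  rw [l1Meas_eq_diff_singleton_add (hμ k) B k]
  by_cases hk : k ∈ B <;> simp [hk]

/-! ### Cluster points -/

theorem isClusterPtOnIn_of_tendsto {μ : ℕ → ℕ → ℝ} {A N : Set ℕ} (hAN : A ⊆ N)
    (hA : A.Infinite) {𝔄 : Set (Set ℕ)} {ν : Set ℕ → ℝ}
    (h : ∀ B ∈ 𝔄, Tendsto (fun k => l1Meas (μ k) B) (cofinite ⊓ 𝓟 A) (𝓝 (ν B))) :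
    IsClusterPtOnIn μ N 𝔄 ν := by
  intro ε hε F hF
  have hN : ∀ᶠ k in cofinite ⊓ 𝓟 A, k ∈ N := mem_inf_of_right (mem_principal.2 hAN)
  exact hA.infinite_of_mem_cofinite_inf_principal <| hN.and <|
    (Finset.eventually_all F).2 fun B hB => (h B (hF hB)).eventually (eventually_abs_sub_lt _ hε)

theorem isClusterPtOnIn_dirac_add {μ : ℕ → ℕ → ℝ} (hμ : ∀ k, Summable (μ k)) {A N : Set ℕ}
    (hAN : A ⊆ N) (hA : A.Infinite) {𝔄 : Set (Set ℕ)} (htriv : 𝔄 ⊆ trivialOn A) {b : ℝ}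
    (hb : Tendsto (fun k => μ k k) (cofinite ⊓ 𝓟 N) (𝓝 b)) {L : Set ℕ → ℝ}
    (hL : ∀ B ∈ 𝔄, Tendsto (fun k => l1Meas (μ k) (B \ {k})) (cofinite ⊓ 𝓟 N) (𝓝 (L B))) :
    IsClusterPtOnIn μ N 𝔄 fun B => b * (if (A \ B).Finite then 1 else 0) + L B := by
  have hle : cofinite ⊓ 𝓟 A ≤ cofinite ⊓ 𝓟 N := inf_le_inf_left _ (principal_mono.2 hAN)
  refine isClusterPtOnIn_of_tendsto hAN hA fun B hB => ?_
  rw [mul_ite, mul_one, mul_zero]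
  refine ((tendsto_indicator_of_mem_trivialOn (htriv hB) (hb.mono_left hle)).add
    ((hL B hB).mono_left hle)).congr fun k => ?_
  rw [l1Meas_eq_diff_singleton_add (hμ k) B k, add_comm]
  by_cases hk : k ∈ B <;> simp [hk]

theorem exists_isClusterPtOnIn_dirac_add {μ : ℕ → ℕ → ℝ} (hμ : ∀ k, Summable (μ k))
    {𝔅 : Set (Set ℕ)} (h𝔅 : IsSetAlgebra 𝔅) {N : Set ℕ} (htriv : 𝔅 ⊆ trivialOn N)
    {ι : Type*} {A : ι → Set ℕ} (hAN : ∀ i, A i ⊆ N) (hA : ∀ i, (A i).Infinite)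
    (hAdisj : ∀ i j, i ≠ j → Disjoint (A i) (A j))
    (h𝔅lim : ∀ B ∈ 𝔅, ∃ L, Tendsto (fun k => l1Meas (μ k) B) (cofinite ⊓ 𝓟 N) (𝓝 L))
    {b : ℝ} (hb : Tendsto (fun k => μ k k) (cofinite ⊓ 𝓟 N) (𝓝 b))
    (hNlim : ∀ C ⊆ N, ∃ L, Tendsto (fun k => l1Meas (μ k) (C \ {k})) (cofinite ⊓ 𝓟 N) (𝓝 L)) :
    ∃ L : Set ℕ → ℝ, ∀ i, IsClusterPtOnIn μ N (generateSetAlgebra (𝔅 ∪ range A))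
      fun B => b * (if (A i \ B).Finite then 1 else 0) + L B := by
  refine ⟨fun B => limUnder (cofinite ⊓ 𝓟 N) fun k => l1Meas (μ k) (B \ {k}), fun i => ?_⟩
  refine isClusterPtOnIn_dirac_add hμ (hAN i) (hA i)
    (generateSetAlgebra_subset_trivialOn htriv hAN hAdisj i) hb fun B hB => ?_
  refine tendsto_nhds_limUnder (exists_tendsto_l1Meas_diff_singleton_of_mem_generateSetAlgebra
    hμ h𝔅 htriv ?_ h𝔅lim hb hNlim hB)
  rintro _ ⟨j, rfl⟩
  exact hAN j

theorem stmt14_general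
    (hp : pseudoIntersectionNumber = Cardinal.continuum)
    (𝔅 : Set (Set ℕ)) (h𝔅 : MeasureTheory.IsSetAlgebra 𝔅)
    (hcard : Cardinal.mk 𝔅 < Cardinal.continuum)
    (S : Set ℕ) (hS : S.Infinite)
    (htriv : ∀ B ∈ 𝔅, (B ∩ S).Finite ∨ (S \ B).Finite)
    (μ : ℕ → ℕ → ℝ)
    (hsum : ∀ n, Summable fun j => |μ n j|)
    (hball : ∀ n, (∑' j, |μ n j|) ≤ 1)
    (c : ℝ)
    (hlarge : ∀ k ∈ S, c ≤ |μ k k|)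
    (ε : ℝ) (hε : 0 < ε) :
    ∃ N T : Set ℕ, N ⊆ S ∧ T ⊆ S ∧ N.Infinite ∧ T.Infinite ∧ Disjoint N T ∧
    ∃ A : Fin 3 → Set ℕ,
      (∀ i, A i ⊆ N) ∧ (∀ i, (A i).Infinite) ∧
      (∀ i j, i ≠ j → Disjoint (A i) (A j)) ∧
      -- (i): `(μ_k)_{k ∈ N}` converges in variation norm on `T`
      (∀ δ > (0 : ℝ), ∃ n₀ : ℕ, ∀ k ∈ N, ∀ m ∈ N, n₀ ≤ k → n₀ ≤ m →
        (∑' j : T, |μ k j - μ m j|) < δ) ∧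
      -- (ii): a `(c, ε)`-fork in the closure of `{μ_k : k ∈ N}` in `M(𝔅′)`, where
      -- `𝔅′ = ⟨𝔅 ∪ {A₀, A₁, A₂}⟩` and `x_i` is the unique nonprincipal ultrafilter
      -- containing `A i`, whose Dirac measure on `𝔅′` is `B ↦ 1` iff `A i ⊆* B`.
      (let 𝔅' := MeasureTheory.generateSetAlgebra (𝔅 ∪ Set.range A)
       let dirac : Fin 3 → Set ℕ → ℝ := fun i B => if (A i \ B).Finite then 1 else 0
       (∀ i j, i ≠ j → dirac i ≠ dirac j) ∧
       ∃ (b : ℝ) (ν : Fin 3 → Set ℕ → ℝ),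
         c ≤ |b| ∧
         (∀ i, IsClusterPtOnIn μ N 𝔅' (fun B => b * dirac i B + ν i B)) ∧
         (∀ i j, ∀ B ∈ 𝔅', |ν i B - ν j B| + |ν i Bᶜ - ν j Bᶜ| ≤ ε)) := by
  obtain ⟨N₀, hN₀S, hN₀, h𝔅lim, hcoord, b, hb⟩ :=
    exists_infinite_subset_tendsto_l1Meas hp hcard hS hsum hball
  choose w hw using hcoord
  have := hN₀.cofinite_inf_principal_neBot
  have hwsum := summable_abs_of_tendsto hw hsum hball
  obtain ⟨m, hm, hmN₀, hdev⟩ := exists_strictMono_tendsto_tsum_abs_sub hsum hwsum hN₀ hw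
  obtain ⟨N, T, A, hN, hT, hNinf, hTinf, hNT, hAN, hAinf, hAdisj⟩ :=
    exists_infinite_disjoint_subsets_range hm.injective (Fin 3)
  have hNS : N ⊆ S := (hN.trans hmN₀).trans hN₀S
  have hleN₀ : cofinite ⊓ 𝓟 N ≤ cofinite ⊓ 𝓟 N₀ :=
    inf_le_inf_left _ (principal_mono.2 (hN.trans hmN₀))
  obtain ⟨L, hL⟩ := exists_isClusterPtOnIn_dirac_add (fun k => (hsum k).of_abs) h𝔅
    (fun B hB => trivialOn_anti hNS (htriv B hB)) hAN hAinf hAdisj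
    (fun B hB => (h𝔅lim B hB).imp fun _ hL => hL.mono_left hleN₀) (hb.mono_left hleN₀)
    fun C hC => ⟨_, (tendsto_l1Meas_diff_singleton hsum hwsum hm hdev (hC.trans hN)).mono_left
      (inf_le_inf_left _ (principal_mono.2 hN))⟩
  refine ⟨N, T, hNS, hT.trans (hmN₀.trans hN₀S), hNinf, hTinf, hNT, A, hAN, hAinf, hAdisj,
    fun δ hδ => exists_forall_tsum_abs_sub_lt hsum hwsum hm hdev hN hT hNT hδ, ?_⟩
  intro 𝔅' dirac
  refine ⟨fun i j hij h => ?_, b, fun _ => L, ?_, hL, fun i j B _ => by simpa using hε.le⟩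
  · have := congrFun h (A i)
    simp [dirac, (hAdisj j i hij.symm).sdiff_eq_left, hAinf] at this
  · exact ge_of_tendsto hb.abs (eventually_of_mem (mem_inf_of_right (mem_principal_self N₀))
      fun k hk => hlarge k (hN₀S hk))

/-- STATEMENT 14 (inductive step, Lemma `step` of the paper), assuming `𝔭 = 𝔠`. -/
theorem stmt14
    (hp : pseudoIntersectionNumber = Cardinal.continuum)
    (𝔅 : Set (Set ℕ)) (h𝔅 : MeasureTheory.IsSetAlgebra 𝔅)
    (hfin : ∀ E : Set ℕ, E.Finite → E ∈ 𝔅)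
    (hcard : Cardinal.mk 𝔅 < Cardinal.continuum)
    (S : Set ℕ) (hS : S.Infinite)
    (htriv : ∀ B ∈ 𝔅, (B ∩ S).Finite ∨ (S \ B).Finite)
    (μ : ℕ → ℕ → ℝ)
    (hsum : ∀ n, Summable fun j => |μ n j|)
    (hball : ∀ n, (∑' j, |μ n j|) ≤ 1)
    (c : ℝ) (hc : 0 < c)
    (hlarge : ∀ k ∈ S, c ≤ |μ k k|)
    (ε : ℝ) (hε : 0 < ε) :
    ∃ N T : Set ℕ, N ⊆ S ∧ T ⊆ S ∧ N.Infinite ∧ T.Infinite ∧ Disjoint N T ∧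
    ∃ A : Fin 3 → Set ℕ,
      (∀ i, A i ⊆ N) ∧ (∀ i, (A i).Infinite) ∧
      (∀ i j, i ≠ j → Disjoint (A i) (A j)) ∧
      -- (i): `(μ_k)_{k ∈ N}` converges in variation norm on `T`
      (∀ δ > (0 : ℝ), ∃ n₀ : ℕ, ∀ k ∈ N, ∀ m ∈ N, n₀ ≤ k → n₀ ≤ m →
        (∑' j : T, |μ k j - μ m j|) < δ) ∧
      -- (ii): a `(c, ε)`-fork in the closure of `{μ_k : k ∈ N}` in `M(𝔅′)`, where
      -- `𝔅′ = ⟨𝔅 ∪ {A₀, A₁, A₂}⟩` and `x_i` is the unique nonprincipal ultrafilter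
      -- containing `A i`, whose Dirac measure on `𝔅′` is `B ↦ 1` iff `A i ⊆* B`.
      (let 𝔅' := MeasureTheory.generateSetAlgebra (𝔅 ∪ Set.range A)
       let dirac : Fin 3 → Set ℕ → ℝ := fun i B => if (A i \ B).Finite then 1 else 0
       (∀ i j, i ≠ j → dirac i ≠ dirac j) ∧
       ∃ (b : ℝ) (ν : Fin 3 → Set ℕ → ℝ),
         c ≤ |b| ∧
         (∀ i, IsClusterPtOnIn μ N 𝔅' (fun B => b * dirac i B + ν i B)) ∧
         (∀ i j, ∀ B ∈ 𝔅', |ν i B - ν j B| + |ν i Bᶜ - ν j Bᶜ| ≤ ε)) :=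
  stmt14_general hp 𝔅 h𝔅 hcard S hS htriv μ hsum hball c hlarge ε hε
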